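/- arXiv:cs/0603034 — 2 statements merged into one kernel-verified Lean document; each statement's English description precedes it below -/
import Mathlib

section
/- Modularity for inexecutabilities: if an action theory ⟨S, E, X, I⟩ satisfies both Postulate PS* and Postulate PI*, then for any classical formula A and action a, S, E, X, I ⊨_⇝ A → [a]⊥ if and only if S, I_a ⊨_⇝ A → [a]⊥. -/
/-! Classical propositional formulas. -/
inductive PForm (α : Type) : Type
  | atom : α → PForm α
  | fls  : PForm α
  | not  : PForm α → PForm α
  | and  : PForm α → PForm α → PForm α
  | or   : PForm α → PForm α → PForm α
  | imp  : PForm α → PForm α → PForm α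

def PForm.Sat {α : Type} (v : α → Prop) : PForm α → Prop
  | atom p => v p
  | fls => False
  | not φ => ¬ Sat v φ
  | and φ ψ => Sat v φ ∧ Sat v ψ
  | or φ ψ => Sat v φ ∨ Sat v ψ
  | imp φ ψ => Sat v φ → Sat v ψ

/-- Classical (propositional) global consequence. -/
def EntailsCl {α : Type} (Γ : Set (PForm α)) (φ : PForm α) : Prop :=
  ∀ v : α → Prop, (∀ ψ ∈ Γ, PForm.Sat v ψ) → PForm.Sat v φ

/-- Multimodal formulas with one box per action. -/
inductive MForm (Act α : Type) : Type
  | atom : α → MForm Act α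
  | fls  : MForm Act α
  | not  : MForm Act α → MForm Act α
  | and  : MForm Act α → MForm Act α → MForm Act α
  | or   : MForm Act α → MForm Act α → MForm Act α
  | imp  : MForm Act α → MForm Act α → MForm Act α
  | box  : Act → MForm Act α → MForm Act α

def PForm.toM {Act α : Type} : PForm α → MForm Act α
  | .atom p => .atom p
  | .fls => .fls
  | .not φ => .not φ.toM
  | .and φ ψ => .and φ.toM ψ.toM
  | .or φ ψ => .or φ.toM ψ.toM
  | .imp φ ψ => .imp φ.toM ψ.toM

/-- A Kripke model for multimodal K. -/
structure KModel (Act α : Type) where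
  W : Type
  R : Act → W → W → Prop
  V : W → α → Prop

def MForm.Sat {Act α : Type} (M : KModel Act α) : M.W → MForm Act α → Prop
  | w, atom p => M.V w p
  | _, fls => False
  | w, not φ => ¬ Sat M w φ
  | w, and φ ψ => Sat M w φ ∧ Sat M w ψ
  | w, or φ ψ => Sat M w φ ∨ Sat M w ψ
  | w, imp φ ψ => Sat M w φ → Sat M w ψ
  | w, box a φ => ∀ w', M.R a w w' → Sat M w' φ

/-- Global truth in a model. -/
def Glob {Act α : Type} (M : KModel Act α) (Φ : MForm Act α) : Prop :=
  ∀ w : M.W, MForm.Sat M w Φ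

/-- Global consequence in multimodal K. -/
def ConsK {Act α : Type} (Γ : Set (MForm Act α)) (Φ : MForm Act α) : Prop :=
  ∀ M : KModel Act α, (∀ Ψ ∈ Γ, Glob M Ψ) → Glob M Φ

/-- Literals. -/
abbrev Lit (α : Type) := α × Bool

def Lit.Sat {α : Type} (v : α → Prop) (l : Lit α) : Prop :=
  if l.2 then v l.1 else ¬ v l.1

/-- A dependence relation `⇝ ⊆ Act × Lit`. -/
abbrev Dep (Act α : Type) := Act → Lit α → Prop

/-- `⇝`-models: along `R a`, literals independent of `a` persist. -/
def IsDepModel {Act α : Type} (dep : Dep Act α) (M : KModel Act α) : Prop :=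
  ∀ (a : Act) (w w' : M.W), M.R a w w' → ∀ p : α,
    (¬ dep a (p, true) → ¬ M.V w p → ¬ M.V w' p) ∧
    (¬ dep a (p, false) → M.V w p → M.V w' p)

/-- Dependence-based global consequence. -/
def ConsDep {Act α : Type} (dep : Dep Act α) (Γ : Set (MForm Act α)) (Φ : MForm Act α) : Prop :=
  ∀ M : KModel Act α, IsDepModel dep M → (∀ Ψ ∈ Γ, Glob M Ψ) → Glob M Φ

/-- An action theory: static laws `S`, effect laws `E` (antecedent/consequent
pairs), executability laws `X` (antecedents), inexecutability laws `I`
(antecedents). -/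
structure ActionTheory (Act α : Type) where
  S : Set (PForm α)
  E : Act → Set (PForm α × PForm α)
  X : Act → Set (PForm α)
  I : Act → Set (PForm α)

/-- `⟨a⟩Φ`. -/
def MForm.diam {Act α : Type} (a : Act) (Φ : MForm Act α) : MForm Act α :=
  .not (.box a (.not Φ))

/-- Effect law `A → [a]C`. -/
def effLaw {Act α : Type} (a : Act) (e : PForm α × PForm α) : MForm Act α :=
  .imp e.1.toM (.box a e.2.toM)

/-- Executability law `A → ⟨a⟩⊤`. -/
def exeLaw {Act α : Type} (a : Act) (A : PForm α) : MForm Act α :=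
  .imp A.toM (MForm.diam a (.not .fls))

/-- Inexecutability law `A → [a]⊥`. -/
def inexLaw {Act α : Type} (a : Act) (A : PForm α) : MForm Act α :=
  .imp A.toM (.box a .fls)

variable {Act α : Type}

def staticForms (T : ActionTheory Act α) : Set (MForm Act α) := PForm.toM '' T.S
def effForms (T : ActionTheory Act α) (a : Act) : Set (MForm Act α) := effLaw a '' T.E a
def exeForms (T : ActionTheory Act α) (a : Act) : Set (MForm Act α) := exeLaw a '' T.X a
def inexForms (T : ActionTheory Act α) (a : Act) : Set (MForm Act α) := inexLaw a '' T.I a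

/-- The action theory of the single action `a`:  `S ∪ E_a ∪ X_a ∪ I_a`. -/
def formsFor (T : ActionTheory Act α) (a : Act) : Set (MForm Act α) :=
  staticForms T ∪ effForms T a ∪ exeForms T a ∪ inexForms T a

/-- The whole action theory:  `S ∪ E ∪ X ∪ I`. -/
def allForms (T : ActionTheory Act α) : Set (MForm Act α) :=
  staticForms T ∪ (⋃ a, effForms T a) ∪ (⋃ a, exeForms T a) ∪ (⋃ a, inexForms T a)

/-- Postulate PS for action `a`: no implicit static laws. -/
def PS (T : ActionTheory Act α) (dep : Dep Act α) (a : Act) : Prop :=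
  ∀ φ : PForm α, ConsDep dep (formsFor T a) φ.toM → EntailsCl T.S φ

/-- Postulate PS*: no implicit static laws for the whole theory. -/
def PSstar (T : ActionTheory Act α) (dep : Dep Act α) : Prop :=
  ∀ φ : PForm α, ConsDep dep (allForms T) φ.toM → EntailsCl T.S φ

/-- Postulate PI for action `a`: no implicit inexecutability laws. -/
def PIpost (T : ActionTheory Act α) (dep : Dep Act α) (a : Act) : Prop :=
  ∀ A : PForm α, ConsDep dep (formsFor T a) (inexLaw a A) →
    ConsK (staticForms T ∪ inexForms T a) (inexLaw a A)

/-- Postulate PI*: no implicit inexecutability laws for the whole theory. -/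
def PIstar (T : ActionTheory Act α) (dep : Dep Act α) : Prop :=
  ∀ (a : Act) (A : PForm α), ConsDep dep (allForms T) (inexLaw a A) →
    ConsK (staticForms T ∪ ⋃ a', inexForms T a') (inexLaw a A)

def KModel.restrictTo (M : KModel Act α) (a : Act) : KModel Act α where
  W := M.W
  R a' w w' := a' = a ∧ M.R a w w'
  V := M.V

theorem PForm.sat_toM_iff (M : KModel Act α) (w : M.W) (φ : PForm α) :
    MForm.Sat M w (φ.toM : MForm Act α) ↔ PForm.Sat (M.V w) φ := by
  induction φ <;> simp [PForm.toM, MForm.Sat, PForm.Sat, *]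

theorem glob_toM_restrictTo_iff (M : KModel Act α) (a : Act) (φ : PForm α) :
    Glob (M.restrictTo a) φ.toM ↔ Glob M φ.toM := by
  simp only [Glob, PForm.sat_toM_iff]
  rfl

theorem glob_inexLaw_restrictTo_iff (M : KModel Act α) (a : Act) (B : PForm α) :
    Glob (M.restrictTo a) (inexLaw a B) ↔ Glob M (inexLaw a B) := by
  simp only [Glob, inexLaw, MForm.Sat, PForm.sat_toM_iff]
  exact ⟨fun h w hB w' hR => h w hB w' ⟨rfl, hR⟩, fun h w hB w' ⟨_, hR⟩ => h w hB w' hR⟩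

theorem glob_inexLaw_restrictTo_of_ne (M : KModel Act α) {a a' : Act} (h : a' ≠ a)
    (B : PForm α) : Glob (M.restrictTo a) (inexLaw a' B) :=
  fun _ _ _ hR => h hR.1

/-- In multimodal K, inexecutability laws of other actions never help to derive one for `a`:
restricting a countermodel to the relation of `a` validates all of them. -/
theorem consK_inexLaw_of_consK_iUnion_inexForms {T : ActionTheory Act α} {a : Act}
    {A : PForm α} (h : ConsK (staticForms T ∪ ⋃ a', inexForms T a') (inexLaw a A)) :
    ConsK (staticForms T ∪ inexForms T a) (inexLaw a A) := by
  intro M hM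
  rw [← glob_inexLaw_restrictTo_iff]
  apply h
  rintro Ψ (⟨φ, hφ, rfl⟩ | hΨ)
  · exact (glob_toM_restrictTo_iff M a φ).2 (hM _ (Or.inl ⟨φ, hφ, rfl⟩))
  · obtain ⟨a', B, hB, rfl⟩ := Set.mem_iUnion.1 hΨ
    by_cases ha : a' = a
    · subst ha
      exact (glob_inexLaw_restrictTo_iff M a' B).2 (hM _ (Or.inr ⟨B, hB, rfl⟩))
    · exact glob_inexLaw_restrictTo_of_ne M ha B

theorem ConsK.consDep {Γ : Set (MForm Act α)} {Φ : MForm Act α} (h : ConsK Γ Φ)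
    (dep : Dep Act α) : ConsDep dep Γ Φ :=
  fun M _ hM => h M hM

theorem ConsDep.mono {dep : Dep Act α} {Γ Δ : Set (MForm Act α)} {Φ : MForm Act α}
    (hΓΔ : Γ ⊆ Δ) (h : ConsDep dep Γ Φ) : ConsDep dep Δ Φ :=
  fun M hDM hM => h M hDM fun Ψ hΨ => hM Ψ (hΓΔ hΨ)

theorem staticForms_union_inexForms_subset_allForms (T : ActionTheory Act α) (a : Act) :
    staticForms T ∪ inexForms T a ⊆ allForms T :=
  Set.union_subset (fun _ h => Or.inl (Or.inl (Or.inl h)))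
    (fun _ h => Or.inr (Set.mem_iUnion.2 ⟨a, h⟩))

theorem stmt_13_general (T : ActionTheory Act α) (dep : Dep Act α)
    (hPI : PIstar T dep) (a : Act) (A : PForm α) :
    ConsDep dep (allForms T) (inexLaw a A) ↔
    ConsDep dep (staticForms T ∪ inexForms T a) (inexLaw a A) :=
  ⟨fun h => (consK_inexLaw_of_consK_iUnion_inexForms (hPI a A h)).consDep dep,
    ConsDep.mono (staticForms_union_inexForms_subset_allForms T a)⟩

/-- modularity for inexecutabilities: under PS* and PI*,
deducing an inexecutability law for `a` only needs `S` and `I_a`. -/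
theorem stmt_13 [Fintype Act] [Fintype α] (T : ActionTheory Act α) (dep : Dep Act α)
    (hPS : PSstar T dep) (hPI : PIstar T dep) (a : Act) (A : PForm α) :
    ConsDep dep (allForms T) (inexLaw a A) ↔
    ConsDep dep (staticForms T ∪ inexForms T a) (inexLaw a A) :=
  stmt_13_general T dep hPI a A
end

section
/- Let S be a set of classical formulas and, for action a, E_a a set of effect laws and I_a a set of inexecutability laws. Suppose that for every subset Ê ⊆ E_a, if S ∪ {⋀antecedents(Ê)} is classically consistent then S ∪ {⋀consequents(Ê)} is classically consistent. Then S, E_a, I_a ⊨_K A → [a]⊥ implies S, I_a ⊨_K A → [a]⊥, for any classical A. -/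
variable {Act α : Type}

/-!
A model `M` of `S ∪ I_a` extends to a model of `S ∪ E_a ∪ I_a` in which the old worlds keep
their valuations and their executability of `a`: give every world `u` a fresh copy as its only
`a`-successor, present exactly when `u` has an `a`-successor in `M`. The effect laws whose
antecedents hold at `u` have `S`-consistent antecedents (witness: the valuation of `u`), so by
hypothesis their consequents have an `S`-model, which becomes the valuation of the copy.
-/

theorem PForm.sat_toM (M : KModel Act α) (w : M.W) (φ : PForm α) :
    MForm.Sat M w (φ.toM : MForm Act α) ↔ φ.Sat (M.V w) := by
  induction φ with
  | atom p => rfl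
  | fls => rfl
  | not φ ih => simp only [PForm.toM, MForm.Sat, PForm.Sat, ih]
  | and φ ψ ih₁ ih₂ => simp only [PForm.toM, MForm.Sat, PForm.Sat, ih₁, ih₂]
  | or φ ψ ih₁ ih₂ => simp only [PForm.toM, MForm.Sat, PForm.Sat, ih₁, ih₂]
  | imp φ ψ ih₁ ih₂ => simp only [PForm.toM, MForm.Sat, PForm.Sat, ih₁, ih₂]

theorem glob_toM_iff (M : KModel Act α) (φ : PForm α) :
    Glob M (φ.toM : MForm Act α) ↔ ∀ w, φ.Sat (M.V w) := by
  simp only [Glob, PForm.sat_toM]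

theorem sat_effLaw_iff (M : KModel Act α) (w : M.W) (a : Act) (e : PForm α × PForm α) :
    MForm.Sat M w (effLaw a e) ↔ (e.1.Sat (M.V w) → ∀ w', M.R a w w' → e.2.Sat (M.V w')) := by
  simp only [effLaw, MForm.Sat, PForm.sat_toM]

theorem sat_inexLaw_iff (M : KModel Act α) (w : M.W) (a : Act) (B : PForm α) :
    MForm.Sat M w (inexLaw a B) ↔ (B.Sat (M.V w) → ∀ w', ¬ M.R a w w') := by
  simp only [inexLaw, MForm.Sat, PForm.sat_toM]

namespace KModel

def freshSucc (M : KModel Act α) (a : Act) (v : M.W → α → Prop) : KModel Act α where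
  W := M.W ⊕ M.W
  R b
    | .inl u, .inr u' => b = a ∧ u = u' ∧ ∃ w, M.R a u w
    | _, _ => False
  V := Sum.elim M.V v

variable (M : KModel Act α) (a : Act) (v : M.W → α → Prop)

theorem freshSucc_R_iff {b : Act} {x y : (M.freshSucc a v).W} :
    (M.freshSucc a v).R b x y ↔ b = a ∧ ∃ u, x = .inl u ∧ y = .inr u ∧ ∃ w, M.R a u w := by
  rcases x with u | u <;> rcases y with u' | u' <;>
    simp [freshSucc, and_comm, eq_comm]

theorem glob_toM_freshSucc {φ : PForm α} (hM : Glob M (φ.toM : MForm Act α))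
    (hv : ∀ u, φ.Sat (v u)) : Glob (M.freshSucc a v) φ.toM := by
  rw [glob_toM_iff] at hM ⊢
  rintro (u | u)
  exacts [hM u, hv u]

theorem glob_effLaw_freshSucc {e : PForm α × PForm α}
    (hv : ∀ u, e.1.Sat (M.V u) → e.2.Sat (v u)) :
    Glob (M.freshSucc a v) (effLaw a e) := by
  intro x
  rw [sat_effLaw_iff]
  intro hx y hxy
  obtain ⟨-, u, rfl, rfl, -⟩ := (M.freshSucc_R_iff a v).1 hxy
  exact hv u hx

theorem glob_inexLaw_freshSucc {B : PForm α} (hM : Glob M (inexLaw a B)) :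
    Glob (M.freshSucc a v) (inexLaw a B) := by
  intro x
  rw [sat_inexLaw_iff]
  intro hx y hxy
  obtain ⟨-, u, rfl, rfl, w, huw⟩ := (M.freshSucc_R_iff a v).1 hxy
  exact (sat_inexLaw_iff M u a B).1 (hM u) hx w huw

end KModel

theorem stmt_15_general {Act : Type} (T : ActionTheory Act α) (a : Act)
    (hyp : ∀ Esub : Set (PForm α × PForm α), Esub ⊆ T.E a →
      (∃ v : α → Prop, (∀ φ ∈ T.S, PForm.Sat v φ) ∧ ∀ e ∈ Esub, PForm.Sat v e.1) →
      (∃ v : α → Prop, (∀ φ ∈ T.S, PForm.Sat v φ) ∧ ∀ e ∈ Esub, PForm.Sat v e.2)) :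
    ∀ A : PForm α,
      ConsK (staticForms T ∪ effForms T a ∪ inexForms T a) (inexLaw a A) →
      ConsK (staticForms T ∪ inexForms T a) (inexLaw a A) := by
  intro A hcons M hM
  have hS : ∀ φ ∈ T.S, Glob M (φ.toM : MForm Act α) := fun φ hφ ↦ hM _ (.inl ⟨φ, hφ, rfl⟩)
  choose v hvS hvE using fun w ↦
    hyp {e ∈ T.E a | e.1.Sat (M.V w)} (Set.sep_subset _ _)
      ⟨M.V w, fun φ hφ ↦ (glob_toM_iff M φ).1 (hS φ hφ) w, fun _ he ↦ he.2⟩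
  have hM' : ∀ Ψ ∈ staticForms T ∪ effForms T a ∪ inexForms T a, Glob (M.freshSucc a v) Ψ := by
    rintro _ ((⟨φ, hφ, rfl⟩ | ⟨e, he, rfl⟩) | ⟨B, hB, rfl⟩)
    · exact M.glob_toM_freshSucc a v (hS φ hφ) fun u ↦ hvS u φ hφ
    · exact M.glob_effLaw_freshSucc a v fun u hu ↦ hvE u e ⟨he, hu⟩
    · exact M.glob_inexLaw_freshSucc a v (hM _ (.inr ⟨B, hB, rfl⟩))
  intro w
  rw [sat_inexLaw_iff]
  intro hA w' hw'
  have hAw : A.Sat ((M.freshSucc a v).V (.inl w)) := hA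
  exact (sat_inexLaw_iff _ _ a A).1 (hcons _ hM' (.inl w)) hAw (.inr w)
    ((M.freshSucc_R_iff a v).2 ⟨rfl, w, rfl, rfl, w', hw'⟩)

/-- Lemma: if no subset of the effect laws of `a` has a
classically `S`-consistent antecedent conjunction with an `S`-inconsistent
consequent conjunction, then the effect laws contribute no new
inexecutabilities in K. -/
theorem stmt_15 [Fintype α] {Act : Type} (T : ActionTheory Act α) (a : Act)
    (hyp : ∀ Esub : Set (PForm α × PForm α), Esub ⊆ T.E a →
      (∃ v : α → Prop, (∀ φ ∈ T.S, PForm.Sat v φ) ∧ ∀ e ∈ Esub, PForm.Sat v e.1) →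
      (∃ v : α → Prop, (∀ φ ∈ T.S, PForm.Sat v φ) ∧ ∀ e ∈ Esub, PForm.Sat v e.2)) :
    ∀ A : PForm α,
      ConsK (staticForms T ∪ effForms T a ∪ inexForms T a) (inexLaw a A) →
      ConsK (staticForms T ∪ inexForms T a) (inexLaw a A) :=
  stmt_15_general T a hyp
end
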